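/- Let K be a field, E a 2-dimensional K-vector space with basis {X,Y}, and m, l ≥ 1. The K-linear map ζ from the S_m-invariants Sym_m(Sym^l E) ⊆ (Sym^l E)^{⊗m} to Λ^m(Sym^{l+m-1} E), defined as the restriction of the map (Sym^l E)^{⊗m} → Λ^m(Sym^{l+m-1} E) sending ⊗_{j=1}^m X^{i_j}Y^{l-i_j} to ∧_{j=1}^m X^{i_j+m-j}Y^{l-i_j+j-1}, is injective. -/

import Mathlib

open scoped TensorProduct
open MvPolynomial

set_option synthInstance.maxHeartbeats 1000000
set_option maxHeartbeats 2000000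

noncomputable section

variable (K : Type*) [Field K]

/-- `Sym^r E` realised as the homogeneous polynomials of degree `r` in the two
variables `X = X 0`, `Y = X 1`, with basis `{X^i Y^{r-i} : 0 ≤ i ≤ r}`. -/
abbrev homog (r : ℕ) : Submodule K (MvPolynomial (Fin 2) K) :=
  homogeneousSubmodule (Fin 2) K r

/-- The invariant symmetric power `Sym_m W ⊆ W^{⊗m}`: the `S_m`-invariants of
the place permutation action. -/
def SymInv (W : Type*) [AddCommGroup W] [Module K W] (m : ℕ) :
    Submodule K (⨂[K]^m W) :=
  ⨅ σ : Equiv.Perm (Fin m),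
    LinearMap.eqLocus (PiTensorProduct.reindex K (fun _ => W) σ).toLinearMap LinearMap.id

/-- Multiplication by the monomial `X^{m-j}Y^{j-1}` (`j` 1-indexed; with our
0-indexed tensor factors the `j`-th monomial is `X^{m-1-j}Y^{j}`), as a linear
map `Sym^l E → Sym^{l+m-1} E`. -/
def mulMono (l m : ℕ) (j : Fin m) : homog K l →ₗ[K] homog K (l + m - 1) :=
  LinearMap.codRestrict _
    ((LinearMap.mulRight K
        ((X 0 : MvPolynomial (Fin 2) K) ^ (m - 1 - (j : ℕ)) * X 1 ^ (j : ℕ))).comp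
      (homog K l).subtype)
    (fun x => by
      have hx : (x : MvPolynomial (Fin 2) K).IsHomogeneous l :=
        (mem_homogeneousSubmodule _ _).mp x.2
      have hmono : ((X 0 : MvPolynomial (Fin 2) K) ^ (m - 1 - (j : ℕ))
          * X 1 ^ (j : ℕ)).IsHomogeneous (m - 1) := by
        have := (isHomogeneous_X_pow (R := K) (0 : Fin 2) (m - 1 - (j : ℕ))).mul
          (isHomogeneous_X_pow (R := K) (1 : Fin 2) (j : ℕ))
        have hj : m - 1 - (j : ℕ) + (j : ℕ) = m - 1 := by omega
        rwa [hj] at this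
      have h := hx.mul hmono
      have hl : l + (m - 1) = l + m - 1 := by
        have := j.2; omega
      rw [hl] at h
      show ((LinearMap.mulRight K _).comp (homog K l).subtype) x ∈ homog K (l + m - 1)
      simp only [LinearMap.coe_comp, Function.comp_apply, Submodule.coe_subtype,
        LinearMap.mulRight_apply]
      exact (mem_homogeneousSubmodule _ _).mpr h)

/-- The `K`-linear extension of
`⊗ⱼ wⱼ ↦ (X^{m-1}Y⁰·w₁) ∧ ⋯ ∧ (X⁰Y^{m-1}·w_m)`, with values in the exterior
algebra of `Sym^{l+m-1} E`. -/
def zetaAux (l m : ℕ) :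
    (⨂[K]^m ↥(homog K l)) →ₗ[K] ExteriorAlgebra K ↥(homog K (l + m - 1)) :=
  PiTensorProduct.lift
    ((ExteriorAlgebra.ιMulti K m
        (M := ↥(homog K (l + m - 1)))).toMultilinearMap.compLinearMap
      (fun j : Fin m => mulMono K l m j))

lemma zetaAux_mem (l m : ℕ) (x : ⨂[K]^m ↥(homog K l)) :
    zetaAux K l m x ∈ ⋀[K]^m ↥(homog K (l + m - 1)) := by
  have hx : x ∈ Submodule.span K
      (Set.range (PiTensorProduct.tprod K (s := fun _ : Fin m => ↥(homog K l)))) := by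
    rw [PiTensorProduct.span_tprod_eq_top]; trivial
  induction hx using Submodule.span_induction with
  | mem w hw =>
    obtain ⟨v, rfl⟩ := hw
    rw [zetaAux, PiTensorProduct.lift.tprod]
    exact ExteriorAlgebra.ιMulti_range K m ⟨fun j => mulMono K l m j (v j), rfl⟩
  | zero => simp
  | add a b ha hb pa pb => rw [map_add]; exact Submodule.add_mem _ pa pb
  | smul c a ha pa => rw [map_smul]; exact Submodule.smul_mem _ c pa

/-- The map `ζ : (Sym^l E)^{⊗m} → Λ^m (Sym^{l+m-1} E)` sending
`⊗ⱼ X^{iⱼ}Y^{l-iⱼ} ↦ ∧ⱼ X^{iⱼ+m-j}Y^{l-iⱼ+j-1}` (1-indexed `j`). -/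
def zeta (l m : ℕ) :
    (⨂[K]^m ↥(homog K l)) →ₗ[K] ↥(⋀[K]^m ↥(homog K (l + m - 1))) :=
  LinearMap.codRestrict _ (zetaAux K l m) (zetaAux_mem K l m)

/-!
Expand `x ∈ Sym_m (Sym^l E)` in the tensor basis `⊗ⱼ X^{uⱼ} Y^{l-uⱼ}`; its coefficients are
invariant under permuting the index `u`. Let `t` be the lexicographically largest index with
nonzero coefficient. It is weakly decreasing, so its staircase `sⱼ = tⱼ + (m-1-j)` is strictly
decreasing, and `ζ` sends the basis vector of an index `u` to the wedge of the monomials of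
exponents `s(u)`. Pairing with the wedge of the coordinate functionals at `s(t)` only sees the
indices `u` with `s(u)` a permutation of `s(t)`, and such a `u ≠ t` could be permuted into an
index lexicographically larger than `t`. Hence that pairing extracts the coefficient of `x` at
`t`, which is nonzero, so `ζ x ≠ 0`.
-/

section MonomialBasis

variable {σ R : Type*} [CommSemiring R]

lemma coe_basisRestrictSupport (s : Set (σ →₀ ℕ)) (d : s) :
    (basisRestrictSupport R s d : MvPolynomial σ R) = monomial (d : σ →₀ ℕ) 1 := by
  suffices basisRestrictSupport R s d = ⟨monomial (d : σ →₀ ℕ) 1, by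
      simp [monomial_mem_restrictSupport]⟩ by
    rw [this]
  rw [Module.Basis.apply_eq_iff]
  ext e
  show coeff (e : σ →₀ ℕ) (monomial (d : σ →₀ ℕ) (1 : R)) = Finsupp.single d 1 e
  classical
  simp [coeff_monomial, Finsupp.single_apply, Subtype.ext_iff]

lemma homogeneousSubmodule_eq_restrictSupport (n : ℕ) :
    homogeneousSubmodule σ R n = restrictSupport R {d : σ →₀ ℕ | d.degree = n} :=
  homogeneousSubmodule_eq_finsupp_supported σ R n

end MonomialBasis

def degreeEquivFin (r : ℕ) : {d : Fin 2 →₀ ℕ | d.degree = r} ≃ Fin (r + 1) where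
  toFun d := ⟨d.1 0, by
    have h := d.2
    simp only [Set.mem_ofPred_eq, Finsupp.degree_eq_sum, Fin.sum_univ_two] at h
    omega⟩
  invFun i := ⟨Finsupp.single 0 (i : ℕ) + Finsupp.single 1 (r - i), by
    simp [Finsupp.degree_eq_sum, Fin.sum_univ_two]; omega⟩
  left_inv d := by
    have h := d.2
    simp only [Set.mem_ofPred_eq, Finsupp.degree_eq_sum, Fin.sum_univ_two] at h
    ext a; fin_cases a <;> simp; omega
  right_inv i := by ext; simp

def monomialBasis (r : ℕ) : Module.Basis (Fin (r + 1)) K (homog K r) :=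
  ((basisRestrictSupport K {d : Fin 2 →₀ ℕ | d.degree = r}).map
    (LinearEquiv.ofEq _ _ (homogeneousSubmodule_eq_restrictSupport r).symm)).reindex
    (degreeEquivFin r)

lemma monomialBasis_coe (r : ℕ) (i : Fin (r + 1)) :
    (monomialBasis K r i : MvPolynomial (Fin 2) K) = X 0 ^ (i : ℕ) * X 1 ^ (r - i) := by
  rw [X_pow_eq_monomial, X_pow_eq_monomial, monomial_mul, one_mul, monomialBasis, Module.Basis.reindex_apply, Module.Basis.map_apply,
    LinearEquiv.coe_ofEq_apply, coe_basisRestrictSupport]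
  rfl

section LexMax

variable {ι α : Type*} [LinearOrder ι] [LinearOrder α]

lemma toLex_lt_comp_swap {t u : ι → α} {j k : ι} (hjk : j ≤ k) (heq : ∀ i < j, u i = t i)
    (hlt : t j < u k) : toLex t < toLex (u ∘ Equiv.swap j k) := by
  refine ⟨j, fun i hi => ?_, by simpa using hlt⟩
  simp [Equiv.swap_apply_of_ne_of_ne hi.ne (hi.trans_le hjk).ne, heq i hi]

lemma antitone_of_forall_toLex_le {A : Set (ι → α)}
    (hA : ∀ u ∈ A, ∀ σ : Equiv.Perm ι, u ∘ σ ∈ A) {t : ι → α} (ht : t ∈ A)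
    (hmax : ∀ v ∈ A, toLex v ≤ toLex t) : Antitone t := by
  intro p q hpq
  by_contra! h
  exact not_lt_of_ge (hmax _ (hA t ht _)) (toLex_lt_comp_swap hpq (fun _ _ => rfl) h)

end LexMax

def staircase {l m : ℕ} (u : Fin m → Fin (l + 1)) (j : Fin m) : Fin (l + m - 1 + 1) :=
  ⟨u j + (m - 1 - j), by omega⟩

lemma staircase_strictAnti {l m : ℕ} {t : Fin m → Fin (l + 1)} (ht : Antitone t) :
    StrictAnti (staircase t) := by
  intro i j hij
  have := ht hij.le
  simp only [staircase, Fin.mk_lt_mk]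
  omega

lemma eq_of_staircase_eq_comp {l m : ℕ} {A : Set (Fin m → Fin (l + 1))}
    (hA : ∀ u ∈ A, ∀ σ : Equiv.Perm (Fin m), u ∘ σ ∈ A) {t u : Fin m → Fin (l + 1)}
    (ht : t ∈ A) (hmax : ∀ v ∈ A, toLex v ≤ toLex t) (hu : u ∈ A) {ρ : Equiv.Perm (Fin m)}
    (hρ : staircase u = staircase t ∘ ρ) : u = t := by
  by_contra hne
  obtain ⟨j, hagree, hj⟩ : toLex u < toLex t := (hmax u hu).lt_of_ne (by simpa using hne)
  simp only [Pi.toLex_apply] at hagree hj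
  have hinj := (staircase_strictAnti (antitone_of_forall_toLex_le hA ht hmax)).injective
  have hfix : ∀ i < j, ρ i = i := fun i hi => hinj <| by
    rw [← Function.comp_apply (f := staircase t), ← hρ]
    simp [staircase, hagree i hi]
  -- the position at which `u` carries the staircase value of `t` at `j`
  set k := ρ.symm j
  have hk : (staircase u k : ℕ) = staircase t j := by simp [hρ, k]
  have hjk : j < k := by
    rcases lt_trichotomy k j with hkj | hkj | hkj
    · exact absurd ((ρ.apply_symm_apply j).symm.trans (hfix k hkj)) hkj.ne'
    · simp only [hkj, staircase] at hk
      omega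
    · exact hkj
  have hjk' : (j : ℕ) < k := hjk
  have hm := k.2
  simp only [staircase] at hk
  exact not_lt_of_ge (hmax _ (hA u hu (Equiv.swap j k)))
    (toLex_lt_comp_swap hjk.le hagree (by omega))

section Pairing

open exteriorPower

variable {ι R M : Type*} [CommRing R] [AddCommGroup M] [Module R M] (b : Module.Basis ι R M)
  {n : ℕ}

lemma exists_perm_of_pairingDual_coord_basis_ne_zero {S w : Fin n → ι}
    (h : pairingDual R M n (ιMulti R n (b.coord ∘ S)) (ιMulti R n (b ∘ w)) ≠ 0) :
    ∃ σ : Equiv.Perm (Fin n), w = S ∘ σ := by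
  classical
  rw [pairingDual_ιMulti_ιMulti, Matrix.det_apply] at h
  obtain ⟨σ, -, hσ⟩ := Finset.exists_ne_zero_of_sum_ne_zero (s := Finset.univ) h
  have hw : ∀ i, w (σ i) = S i := fun i => by
    by_contra hne
    refine hσ (smul_eq_zero_of_right _ (Finset.prod_eq_zero (Finset.mem_univ i) ?_))
    simp [Finsupp.single_apply, hne]
  exact ⟨σ.symm, funext fun i => by simpa using hw (σ.symm i)⟩

lemma pairingDual_coord_basis_self {S : Fin n → ι} (hS : Function.Injective S) :
    pairingDual R M n (ιMulti R n (b.coord ∘ S)) (ιMulti R n (b ∘ S)) = 1 := by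
  classical
  rw [pairingDual_ιMulti_ιMulti, ← Matrix.det_one (n := Fin n) (R := R)]
  congr 1
  ext i j
  simp [Matrix.one_apply, Finsupp.single_apply, hS.eq_iff]

end Pairing

section TensorBasis

variable {ι κ R M : Type*} [Fintype ι] [CommRing R] [AddCommGroup M]
  [Module R M] (b : Module.Basis κ R M)

lemma Basis.piTensorProduct_repr_reindex (σ : Equiv.Perm ι) (x : ⨂[R] _ : ι, M)
    (u : ι → κ) :
    (Basis.piTensorProduct fun _ => b).repr (PiTensorProduct.reindex R (fun _ => M) σ x) u
      = (Basis.piTensorProduct fun _ => b).repr x (u ∘ σ) := by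
  let B := Basis.piTensorProduct fun _ : ι => b
  suffices (B.coord u).comp (PiTensorProduct.reindex R (fun _ => M) σ).toLinearMap
      = B.coord (u ∘ σ) from LinearMap.congr_fun this x
  ext v
  simp only [LinearMap.compMultilinearMap_apply, LinearMap.coe_comp, Function.comp_apply,
    LinearEquiv.coe_coe, PiTensorProduct.reindex_tprod, Module.Basis.coord_apply, B,
    Basis.piTensorProduct_repr_tprod_apply]
  exact (Equiv.prod_comp σ _).symm.trans (by simp)

end TensorBasis

lemma mulMono_monomialBasis {l m : ℕ} (u : Fin m → Fin (l + 1)) (j : Fin m) :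
    mulMono K l m j (monomialBasis K l (u j)) = monomialBasis K (l + m - 1) (staircase u j) := by
  apply Subtype.ext
  change (monomialBasis K l (u j) : MvPolynomial (Fin 2) K)
    * (X 0 ^ (m - 1 - (j : ℕ)) * X 1 ^ (j : ℕ)) = _
  rw [monomialBasis_coe, monomialBasis_coe, staircase]
  have hu := (u j).2
  have hj := j.2
  rw [show l + m - 1 - ((u j : ℕ) + (m - 1 - j)) = l - u j + j by omega]
  ring

lemma zeta_tprod_monomialBasis {l m : ℕ} (u : Fin m → Fin (l + 1)) :
    zeta K l m (⨂ₜ[K] j, monomialBasis K l (u j))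
      = exteriorPower.ιMulti K m (monomialBasis K (l + m - 1) ∘ staircase u) := by
  apply Subtype.ext
  simp only [zeta, LinearMap.codRestrict_apply, zetaAux, PiTensorProduct.lift.tprod,
    exteriorPower.ιMulti_apply_coe, MultilinearMap.compLinearMap_apply,
    AlternatingMap.coe_multilinearMap, mulMono_monomialBasis]
  rfl

lemma repr_comp_perm_of_mem_symInv {W κ : Type*} [AddCommGroup W] [Module K W]
    (b : Module.Basis κ K W) {m : ℕ} {x : ⨂[K]^m W} (hx : x ∈ SymInv K W m)
    (u : Fin m → κ) (σ : Equiv.Perm (Fin m)) :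
    (Basis.piTensorProduct fun _ => b).repr x (u ∘ σ)
      = (Basis.piTensorProduct fun _ => b).repr x u := by
  simp only [SymInv, Submodule.mem_iInf, LinearMap.mem_eqLocus, LinearEquiv.coe_coe,
    LinearMap.id_apply] at hx
  rw [← Basis.piTensorProduct_repr_reindex, hx σ]

lemma eq_zero_of_mem_symInv_of_zeta_eq_zero {l m : ℕ} {x : ⨂[K]^m ↥(homog K l)}
    (hx : x ∈ SymInv K (homog K l) m) (hz : zeta K l m x = 0) : x = 0 := by
  set B := Basis.piTensorProduct fun _ : Fin m => monomialBasis K l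
  by_contra hx0
  set A := (B.repr x).support
  have hA : ∀ u ∈ A, ∀ σ : Equiv.Perm (Fin m), u ∘ σ ∈ A := fun u hu σ => by
    rwa [Finsupp.mem_support_iff, repr_comp_perm_of_mem_symInv K _ hx, ← Finsupp.mem_support_iff]
  obtain ⟨t, ht, hmax⟩ := A.exists_max_image toLex
    (Finsupp.support_nonempty_iff.mpr (by simpa using hx0))
  let φ := exteriorPower.pairingDual K (homog K (l + m - 1)) m
    (exteriorPower.ιMulti K m ((monomialBasis K (l + m - 1)).coord ∘ staircase t))
  have hφ : φ (zeta K l m x) = B.repr x t := by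
    conv_lhs => rw [← B.sum_repr x]
    rw [map_sum, map_sum, Finset.sum_eq_single t]
    · rw [map_smul, map_smul, Basis.piTensorProduct_apply, zeta_tprod_monomialBasis,
        pairingDual_coord_basis_self _
          (staircase_strictAnti (antitone_of_forall_toLex_le hA ht hmax)).injective]
      simp [B]
    · intro u _ hut
      rw [map_smul, map_smul, Basis.piTensorProduct_apply, zeta_tprod_monomialBasis, smul_eq_mul]
      by_contra hne
      obtain ⟨ρ, hρ⟩ := exists_perm_of_pairingDual_coord_basis_ne_zero _ (right_ne_zero_of_mul hne)
      exact hut (eq_of_staircase_eq_comp hA ht hmax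
        (Finsupp.mem_support_iff.mpr (left_ne_zero_of_mul hne)) hρ)
    · simp
  rw [hz, map_zero] at hφ
  exact Finsupp.mem_support_iff.mp ht hφ.symm

theorem stmt12 (l m : ℕ) :
    Function.Injective
      (fun x : SymInv K (↥(homog K l)) m =>
        zeta K l m (x : ⨂[K]^m ↥(homog K l))) := by
  intro x y hxy
  -- instance search finds no `AddSubgroupClass` for submodules of `⨂[K]^m ↥(homog K l)`,
  -- so `sub_mem` is not available
  have hmem : (x : ⨂[K]^m ↥(homog K l)) - y ∈ SymInv K (homog K l) m := by
    rw [sub_eq_add_neg, ← neg_one_smul K (y : ⨂[K]^m ↥(homog K l))]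
    exact add_mem x.2 (Submodule.smul_mem _ _ y.2)
  have hzero : zeta K l m ((x : ⨂[K]^m ↥(homog K l)) - y) = 0 := by
    rw [map_sub]
    exact sub_eq_zero.mpr hxy
  exact Subtype.ext (sub_eq_zero.mp (eq_zero_of_mem_symInv_of_zeta_eq_zero K hmem hzero))

end
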